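/- arXiv:1307.5149 — 2 statements merged into one kernel-verified Lean document; each statement's English description precedes it below -/
import Mathlib

section
/- Let 0 < q < p - 1 < r, A > 0, B > 0, and C < 0. Then the function φ(t) = (A/p)t^p − (C/(q+1))t^{q+1} − (B/(r+1))t^{r+1} on (0,∞) has exactly one critical point t₁, φ is strictly increasing on (0, t₁) and strictly decreasing on (t₁, ∞), and t₁ is a global maximum of φ on (0,∞) with φ(t₁) > 0. -/
open Set Filter Topology

/-! The derivative of `φ` is `t ^ (p - 1)` times `A - C t^(q-(p-1)) - B t^(r-(p-1))`. Since
`q - (p - 1) < 0 < r - (p - 1)` and `C < 0 < B`, this second factor is strictly decreasing, from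
`+∞` at `0⁺` to `-∞` at `+∞`, so it vanishes exactly once, at `t₁`, where `φ'` changes sign from
`+` to `-`. As `φ` extends continuously by `φ 0 = 0` and increases on `[0, t₁]`, `φ t₁ > 0`. -/

lemma exists_zero_of_tendsto_nhdsGT_atTop_of_tendsto_atTop_atBot {f : ℝ → ℝ} {a : ℝ}
    (hf : ContinuousOn f (Ioi a)) (hleft : Tendsto f (𝓝[>] a) atTop)
    (hright : Tendsto f atTop atBot) : ∃ c, a < c ∧ f c = 0 := by
  obtain ⟨x, hfx, hx⟩ := ((hleft.eventually_gt_atTop 0).and self_mem_nhdsWithin).exists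
  obtain ⟨y, hfy, hxy⟩ := ((hright.eventually_lt_atBot 0).and (eventually_gt_atTop x)).exists
  obtain ⟨c, hc, hfc⟩ := intermediate_value_Icc' hxy.le
    (hf.mono fun t ht => lt_of_lt_of_le hx ht.1) ⟨hfy.le, hfx.le⟩
  exact ⟨c, lt_of_lt_of_le hx hc.1, hfc⟩

noncomputable section

namespace Fibering

variable {p q r A B C : ℝ}

def map (p q r A B C t : ℝ) : ℝ :=
  A / p * t ^ p - C / (q + 1) * t ^ (q + 1) - B / (r + 1) * t ^ (r + 1)

/-- `t ^ (1 - p) * φ' t`: the paper's `m(t) - C` divided by `t ^ (p - 1 - q)`, which makes it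
monotone. -/
def slope (p q r A B C t : ℝ) : ℝ :=
  A - C * t ^ (q - (p - 1)) - B * t ^ (r - (p - 1))

lemma map_zero (hp : p ≠ 0) (hq : q + 1 ≠ 0) (hr : r + 1 ≠ 0) : map p q r A B C 0 = 0 := by
  simp [map, Real.zero_rpow, hp, hq, hr]

lemma continuous_map (hp : 0 ≤ p) (hq : 0 ≤ q + 1) (hr : 0 ≤ r + 1) :
    Continuous (map p q r A B C) := by
  unfold map
  have := Real.continuous_rpow_const hp
  have := Real.continuous_rpow_const hq
  have := Real.continuous_rpow_const hr
  fun_prop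

lemma hasDerivAt_map {t : ℝ} (ht : 0 < t) (hp : p ≠ 0) (hq : q + 1 ≠ 0) (hr : r + 1 ≠ 0) :
    HasDerivAt (map p q r A B C) (t ^ (p - 1) * slope p q r A B C t) t := by
  have hpow (s : ℝ) : HasDerivAt (fun x : ℝ => x ^ s) (s * t ^ (s - 1)) t :=
    Real.hasDerivAt_rpow_const (Or.inl ht.ne')
  have hmul (s : ℝ) : t ^ (p - 1) * t ^ (s - (p - 1)) = t ^ s := by
    rw [← Real.rpow_add ht, add_sub_cancel]
  refine ((((hpow p).const_mul (A / p)).sub ((hpow (q + 1)).const_mul (C / (q + 1)))).sub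
    ((hpow (r + 1)).const_mul (B / (r + 1)))).congr_deriv ?_
  simp only [slope, mul_sub, add_sub_cancel_right]
  rw [mul_left_comm _ C, hmul, mul_left_comm _ B, hmul]
  field_simp

lemma strictAntiOn_slope (hB : 0 < B) (hC : C < 0) (hqp : q < p - 1) (hpr : p - 1 < r) :
    StrictAntiOn (slope p q r A B C) (Ioi 0) := by
  intro x hx y _ hxy
  have h₁ : y ^ (q - (p - 1)) < x ^ (q - (p - 1)) :=
    Real.rpow_lt_rpow_of_neg hx hxy (by linarith)
  have h₂ : x ^ (r - (p - 1)) < y ^ (r - (p - 1)) :=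
    Real.rpow_lt_rpow (le_of_lt hx) hxy (by linarith)
  simp only [slope]
  nlinarith

lemma continuousOn_slope : ContinuousOn (slope p q r A B C) (Ioi 0) := by
  intro t ht
  have := Real.continuousAt_rpow_const t (q - (p - 1)) (Or.inl (ne_of_gt ht))
  have := Real.continuousAt_rpow_const t (r - (p - 1)) (Or.inl (ne_of_gt ht))
  unfold slope
  fun_prop

lemma tendsto_slope_nhdsGT_zero (hC : C < 0) (hqp : q < p - 1) (hpr : p - 1 < r) :
    Tendsto (slope p q r A B C) (𝓝[>] 0) atTop := by
  have h₁ := (tendsto_rpow_neg_nhdsGT_zero (sub_neg.2 hqp)).const_mul_atTop (neg_pos.2 hC)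
  have h₂ : Tendsto (fun t : ℝ => t ^ (r - (p - 1))) (𝓝[>] 0) (𝓝 0) := by
    simpa [Real.zero_rpow (sub_pos.2 hpr).ne'] using
      (Real.continuousAt_rpow_const 0 _ (Or.inr (sub_pos.2 hpr).le)).tendsto.mono_left
        nhdsWithin_le_nhds
  exact (h₁.atTop_add ((h₂.const_mul B).const_sub A)).congr fun t => by simp only [slope]; ring

lemma tendsto_slope_atTop (hB : 0 < B) (hqp : q < p - 1) (hpr : p - 1 < r) :
    Tendsto (slope p q r A B C) atTop atBot := by
  have h₁ : Tendsto (fun t : ℝ => t ^ (q - (p - 1))) atTop (𝓝 0) := by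
    simpa using tendsto_rpow_neg_atTop (sub_pos.2 hqp)
  have h₂ := (tendsto_rpow_atTop (sub_pos.2 hpr)).const_mul_atTop_of_neg (neg_neg_iff_pos.2 hB)
  exact (((h₁.const_mul C).const_sub A).add_atBot h₂).congr fun t => by simp only [slope]; ring

end Fibering

end

theorem stmt_5_general (p q r A B C : ℝ) (hq : 0 < q) (hqp : q < p - 1) (hpr : p - 1 < r)
    (hB : 0 < B) (hC : C < 0)
    (φ : ℝ → ℝ)
    (hφ : ∀ t, φ t = (A / p) * t ^ p - (C / (q + 1)) * t ^ (q + 1)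
      - (B / (r + 1)) * t ^ (r + 1)) :
    ∃ t₁ : ℝ, 0 < t₁ ∧ deriv φ t₁ = 0 ∧
      (∀ t : ℝ, 0 < t → deriv φ t = 0 → t = t₁) ∧
      StrictMonoOn φ (Set.Ioc 0 t₁) ∧ StrictAntiOn φ (Set.Ici t₁) ∧
      (∀ t : ℝ, 0 < t → φ t ≤ φ t₁) ∧ 0 < φ t₁ := by
  have hp : 0 < p := by linarith
  have hq₁ : 0 < q + 1 := by linarith
  have hr₁ : 0 < r + 1 := by linarith
  obtain rfl : φ = Fibering.map p q r A B C := funext hφ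
  set φ := Fibering.map p q r A B C
  set g := Fibering.slope p q r A B C
  have hφc : Continuous φ := Fibering.continuous_map hp.le hq₁.le hr₁.le
  have hg : StrictAntiOn g (Ioi 0) := Fibering.strictAntiOn_slope hB hC hqp hpr
  obtain ⟨t₁, ht₁, hg₁ : g t₁ = 0⟩ := exists_zero_of_tendsto_nhdsGT_atTop_of_tendsto_atTop_atBot
    Fibering.continuousOn_slope (Fibering.tendsto_slope_nhdsGT_zero hC hqp hpr)
    (Fibering.tendsto_slope_atTop hB hqp hpr)
  have hderiv {t : ℝ} (ht : 0 < t) : deriv φ t = t ^ (p - 1) * g t :=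
    (Fibering.hasDerivAt_map ht hp.ne' hq₁.ne' hr₁.ne').deriv
  have hmono : StrictMonoOn φ (Icc 0 t₁) := by
    refine strictMonoOn_of_deriv_pos (convex_Icc 0 t₁) hφc.continuousOn fun t ht => ?_
    rw [interior_Icc] at ht
    rw [hderiv ht.1]
    exact mul_pos (Real.rpow_pos_of_pos ht.1 _) (hg₁ ▸ hg ht.1 ht₁ ht.2)
  have hanti : StrictAntiOn φ (Ici t₁) := by
    refine strictAntiOn_of_deriv_neg (convex_Ici t₁) hφc.continuousOn fun t ht => ?_
    rw [interior_Ici] at ht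
    have ht₀ : 0 < t := ht₁.trans ht
    rw [hderiv ht₀]
    exact mul_neg_of_pos_of_neg (Real.rpow_pos_of_pos ht₀ _) (hg₁ ▸ hg ht₁ ht₀ ht)
  refine ⟨t₁, ht₁, by rw [hderiv ht₁, hg₁, mul_zero], fun t ht h => ?_,
    hmono.mono Ioc_subset_Icc_self, hanti, fun t ht => ?_, ?_⟩
  · rw [hderiv ht, mul_eq_zero] at h
    exact hg.injOn ht ht₁ ((h.resolve_left (Real.rpow_pos_of_pos ht _).ne').trans hg₁.symm)
  · rcases le_total t t₁ with h | h
    · exact hmono.monotoneOn ⟨ht.le, h⟩ ⟨ht₁.le, le_rfl⟩ h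
    · exact hanti.antitoneOn self_mem_Ici h h
  · have hφ₀ : φ 0 = 0 := Fibering.map_zero hp.ne' hq₁.ne' hr₁.ne'
    exact hφ₀ ▸ hmono (left_mem_Icc.2 ht₁.le) (right_mem_Icc.2 ht₁.le) ht₁

theorem stmt_5 (p q r A B C : ℝ) (hq : 0 < q) (hqp : q < p - 1) (hpr : p - 1 < r)
    (hA : 0 < A) (hB : 0 < B) (hC : C < 0)
    (φ : ℝ → ℝ)
    (hφ : ∀ t, φ t = (A / p) * t ^ p - (C / (q + 1)) * t ^ (q + 1)
      - (B / (r + 1)) * t ^ (r + 1)) :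
    ∃ t₁ : ℝ, 0 < t₁ ∧ deriv φ t₁ = 0 ∧
      (∀ t : ℝ, 0 < t → deriv φ t = 0 → t = t₁) ∧
      StrictMonoOn φ (Set.Ioc 0 t₁) ∧ StrictAntiOn φ (Set.Ici t₁) ∧
      (∀ t : ℝ, 0 < t → φ t ≤ φ t₁) ∧ 0 < φ t₁ :=
  stmt_5_general p q r A B C hq hqp hpr hB hC φ hφ
end

section
/- Let 0 < q < p - 1 < r, A > 0, C > 0, and B < 0. Then the function φ(t) = (A/p)t^p − (C/(q+1))t^{q+1} − (B/(r+1))t^{r+1} on (0,∞) has exactly one critical point t₁, φ is strictly decreasing on (0, t₁) and strictly increasing on (t₁, ∞), and t₁ is a global minimum of φ on (0,∞). -/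
/-!
Write `φ'(t) = t^q (m(t) - C)` with `m(t) = A t^(p-1-q) - B t^(r-q)`. Since `A > 0`, `B < 0`
and both exponents are positive, `m` is continuous and strictly increasing from `m(0) = 0 < C`
to `+∞`, so it crosses the level `C` at exactly one point `t₁`; the sign of `φ'` is that of
`m - C`, negative before `t₁` and positive after it.
-/

open Set Filter

section LevelCrossing

variable {f w m : ℝ → ℝ} {C t₁ : ℝ}

theorem strictAntiOn_Ioc_of_hasDerivAt_mul_sub
    (hf : ∀ t, 0 < t → HasDerivAt f (w t * (m t - C)) t) (hw : ∀ t, 0 < t → 0 < w t)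
    (hm : StrictMonoOn m (Ioi 0)) (ht₁ : 0 < t₁) (hmt₁ : m t₁ = C) :
    StrictAntiOn f (Ioc 0 t₁) := by
  refine strictAntiOn_of_deriv_neg (convex_Ioc 0 t₁)
    (fun t ht => (hf t ht.1).continuousAt.continuousWithinAt) fun t ht => ?_
  rw [interior_Ioc] at ht
  have hlt : m t < C := hmt₁ ▸ hm ht.1 ht₁ ht.2
  rw [(hf t ht.1).deriv]
  exact mul_neg_of_pos_of_neg (hw t ht.1) (sub_neg.2 hlt)

theorem strictMonoOn_Ici_of_hasDerivAt_mul_sub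
    (hf : ∀ t, 0 < t → HasDerivAt f (w t * (m t - C)) t) (hw : ∀ t, 0 < t → 0 < w t)
    (hm : StrictMonoOn m (Ioi 0)) (ht₁ : 0 < t₁) (hmt₁ : m t₁ = C) :
    StrictMonoOn f (Ici t₁) := by
  have hpos : ∀ t ∈ Ici t₁, 0 < t := fun t ht => ht₁.trans_le ht
  refine strictMonoOn_of_deriv_pos (convex_Ici t₁)
    (fun t ht => (hf t (hpos t ht)).continuousAt.continuousWithinAt) fun t ht => ?_
  rw [interior_Ici] at ht
  have ht0 : 0 < t := ht₁.trans ht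
  have hlt : C < m t := hmt₁ ▸ hm ht₁ ht0 ht
  rw [(hf t ht0).deriv]
  exact mul_pos (hw t ht0) (sub_pos.2 hlt)

theorem eq_of_deriv_eq_zero_of_hasDerivAt_mul_sub
    (hf : ∀ t, 0 < t → HasDerivAt f (w t * (m t - C)) t) (hw : ∀ t, 0 < t → 0 < w t)
    (hm : StrictMonoOn m (Ioi 0)) (ht₁ : 0 < t₁) (hmt₁ : m t₁ = C)
    {t : ℝ} (ht : 0 < t) (hft : deriv f t = 0) : t = t₁ := by
  rw [(hf t ht).deriv, mul_eq_zero, sub_eq_zero] at hft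
  exact hm.injOn ht ht₁ (hmt₁ ▸ hft.resolve_left (hw t ht).ne')

end LevelCrossing

theorem isMinOn_Ioi_of_strictAntiOn_Ioc_of_strictMonoOn_Ici {f : ℝ → ℝ} {t₁ : ℝ}
    (ht₁ : 0 < t₁) (hanti : StrictAntiOn f (Ioc 0 t₁)) (hmono : StrictMonoOn f (Ici t₁)) :
    IsMinOn f (Ioi 0) t₁ := by
  intro t (ht : 0 < t)
  rcases le_total t t₁ with h | h
  · exact hanti.antitoneOn ⟨ht, h⟩ ⟨ht₁, le_rfl⟩ h
  · exact hmono.monotoneOn self_mem_Ici h h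

section PowerDifference

variable {A B a b : ℝ}

theorem strictMonoOn_mul_rpow_sub_mul_rpow (hA : 0 < A) (hB : B ≤ 0) (ha : 0 < a) (hb : 0 < b) :
    StrictMonoOn (fun t : ℝ => A * t ^ a - B * t ^ b) (Ici 0) := by
  intro x hx y _ hxy
  have h₁ : x ^ a < y ^ a := Real.rpow_lt_rpow hx hxy ha
  have h₂ : x ^ b < y ^ b := Real.rpow_lt_rpow hx hxy hb
  dsimp only
  nlinarith

theorem continuous_mul_rpow_sub_mul_rpow (ha : 0 ≤ a) (hb : 0 ≤ b) :
    Continuous fun t : ℝ => A * t ^ a - B * t ^ b :=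
  (continuous_const.mul (Real.continuous_rpow_const ha)).sub
    (continuous_const.mul (Real.continuous_rpow_const hb))

theorem tendsto_mul_rpow_sub_mul_rpow_atTop (hA : 0 < A) (hB : B ≤ 0) (ha : 0 < a) :
    Tendsto (fun t : ℝ => A * t ^ a - B * t ^ b) atTop atTop := by
  refine tendsto_atTop_mono' _ ?_ ((tendsto_rpow_atTop ha).const_mul_atTop hA)
  filter_upwards [eventually_ge_atTop 0] with t ht
  nlinarith [Real.rpow_nonneg ht b]

end PowerDifference

theorem hasDerivAt_fibering {p q r A B C t : ℝ} (hp : p ≠ 0) (hq : q + 1 ≠ 0)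
    (hr : r + 1 ≠ 0) (ht : 0 < t) :
    HasDerivAt
      (fun t => (A / p) * t ^ p - (C / (q + 1)) * t ^ (q + 1) - (B / (r + 1)) * t ^ (r + 1))
      (t ^ q * ((A * t ^ (p - 1 - q) - B * t ^ (r - q)) - C)) t := by
  have h := (((Real.hasDerivAt_rpow_const (p := p) (Or.inl ht.ne')).const_mul (A / p)).sub
    ((Real.hasDerivAt_rpow_const (p := q + 1) (Or.inl ht.ne')).const_mul (C / (q + 1)))).sub
    ((Real.hasDerivAt_rpow_const (p := r + 1) (Or.inl ht.ne')).const_mul (B / (r + 1)))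
  refine h.congr_deriv ?_
  have hA : t ^ q * t ^ (p - 1 - q) = t ^ (p - 1) := by rw [← Real.rpow_add ht]; ring_nf
  have hB : t ^ q * t ^ (r - q) = t ^ r := by rw [← Real.rpow_add ht]; ring_nf
  rw [add_sub_cancel_right, add_sub_cancel_right]
  field_simp
  linear_combination B * hB - A * hA

theorem stmt_6 (p q r A B C : ℝ) (hq : 0 < q) (hqp : q < p - 1) (hpr : p - 1 < r)
    (hA : 0 < A) (hC : 0 < C) (hB : B < 0)
    (φ : ℝ → ℝ)
    (hφ : ∀ t, φ t = (A / p) * t ^ p - (C / (q + 1)) * t ^ (q + 1)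
      - (B / (r + 1)) * t ^ (r + 1)) :
    ∃ t₁ : ℝ, 0 < t₁ ∧ deriv φ t₁ = 0 ∧
      (∀ t : ℝ, 0 < t → deriv φ t = 0 → t = t₁) ∧
      StrictAntiOn φ (Set.Ioc 0 t₁) ∧ StrictMonoOn φ (Set.Ici t₁) ∧
      (∀ t : ℝ, 0 < t → φ t₁ ≤ φ t) := by
  obtain rfl : φ = _ := funext hφ
  set m : ℝ → ℝ := fun t => A * t ^ (p - 1 - q) - B * t ^ (r - q)
  have hder : ∀ t, 0 < t → HasDerivAt _ (t ^ q * (m t - C)) t := fun t ht =>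
    hasDerivAt_fibering (by linarith) (by linarith) (by linarith) ht
  have hw : ∀ t : ℝ, 0 < t → 0 < t ^ q := fun t ht => Real.rpow_pos_of_pos ht q
  have hm : StrictMonoOn m (Ici 0) :=
    strictMonoOn_mul_rpow_sub_mul_rpow hA hB.le (by linarith) (by linarith)
  have hm0 : m 0 = 0 := by
    simp only [m, Real.zero_rpow (by linarith : p - 1 - q ≠ 0),
      Real.zero_rpow (by linarith : r - q ≠ 0)]
    ring
  obtain ⟨t₁, ht₁0, hmt₁ : m t₁ = C⟩ := intermediate_value_Ici
    (continuous_mul_rpow_sub_mul_rpow (by linarith) (by linarith)).continuousOn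
    (tendsto_mul_rpow_sub_mul_rpow_atTop hA hB.le (by linarith))
    (show C ∈ Ici (m 0) by rw [mem_Ici, hm0]; exact hC.le)
  have ht₁ : 0 < t₁ := ht₁0.lt_of_ne <| by rintro rfl; linarith
  have hm' := hm.mono Ioi_subset_Ici_self
  have hanti := strictAntiOn_Ioc_of_hasDerivAt_mul_sub hder hw hm' ht₁ hmt₁
  have hmono := strictMonoOn_Ici_of_hasDerivAt_mul_sub hder hw hm' ht₁ hmt₁
  refine ⟨t₁, ht₁, by rw [(hder t₁ ht₁).deriv, hmt₁, sub_self, mul_zero],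
    fun t ht => eq_of_deriv_eq_zero_of_hasDerivAt_mul_sub hder hw hm' ht₁ hmt₁ ht, hanti, hmono,
    fun t ht => isMinOn_Ioi_of_strictAntiOn_Ioc_of_strictMonoOn_Ici ht₁ hanti hmono ht⟩
end
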